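/- arXiv:1501.02604 — 9 statements merged into one kernel-verified Lean document; each statement's English description precedes it below -/
import Mathlib

section
/- There exist 2×2 matrices A and B (namely A = [[1,3],[4,1]], B = [[1,0],[0,−1]]) such that the eigenvalue complementarity problem x ≥ 0, x ≠ 0, λBx − Ax ≥ 0, ⟨x, λBx − Ax⟩ = 0 has no solution (λ, x) ∈ ℝ × (ℝ₊² \ {0}). -/
/-- the EiCP for A = [[1,3],[4,1]], B = [[1,0],[0,−1]] has no solution. -/
theorem eicp_no_solution :
    ¬ ∃ (lam : ℝ) (x : Fin 2 → ℝ), (∀ i, 0 ≤ x i) ∧ x ≠ 0 ∧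
      (∀ i, 0 ≤ (lam • (!![(1:ℝ),0;0,-1]).mulVec x - (!![(1:ℝ),3;4,1]).mulVec x) i) ∧
      ∑ i, x i * (lam • (!![(1:ℝ),0;0,-1]).mulVec x - (!![(1:ℝ),3;4,1]).mulVec x) i = 0 := by
  rintro ⟨lam, x, hx, hne, hw, hsum⟩
  have h0 := hx 0
  have h1 := hx 1
  have hw0 := hw 0
  have hw1 := hw 1
  simp [Matrix.mulVec, dotProduct, Fin.sum_univ_two] at hw0 hw1 hsum
  have hor : 0 < x 0 ∨ 0 < x 1 := by
    by_contra h
    push_neg at h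
    apply hne
    funext i
    fin_cases i
    · exact le_antisymm h.1 h0
    · exact le_antisymm h.2 h1
  -- each complementarity term is zero
  have t0 : 0 ≤ x 0 * (lam * x 0 - (x 0 + 3 * x 1)) := mul_nonneg h0 (by linarith)
  have t1 : 0 ≤ x 1 * (lam * -x 1 - (4 * x 0 + x 1)) := mul_nonneg h1 (by linarith)
  have e0 : x 0 * (lam * x 0 - (x 0 + 3 * x 1)) = 0 := by nlinarith
  have e1 : x 1 * (lam * -x 1 - (4 * x 0 + x 1)) = 0 := by nlinarith
  rcases hor with hp | hp
  · rcases eq_or_lt_of_le h1 with h1e | h1p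
    · -- x1 = 0, so lam = 1, but hw1 gives -4 x0 ≥ 0
      nlinarith
    · have q0 : lam * x 0 - (x 0 + 3 * x 1) = 0 := by
        rcases mul_eq_zero.mp e0 with h | h
        · exact absurd h hp.ne'
        · exact h
      have q1 : lam * -x 1 - (4 * x 0 + x 1) = 0 := by
        rcases mul_eq_zero.mp e1 with h | h
        · exact absurd h h1p.ne'
        · exact h
      nlinarith [mul_pos hp h1p, sq_nonneg (x 0), sq_nonneg (x 1)]
  · rcases eq_or_lt_of_le h0 with h0e | h0p
    · nlinarith
    · nlinarith [sq_nonneg lam, mul_pos hp h0p]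
end

section
/- Let 𝒜, ℬ be symmetric m-th order n-dimensional tensors with ℬ strictly copositive, and let x̄ be a KKT (stationary) point of the problem of maximizing λ(x) = 𝒜x^m/ℬx^m over the simplex S = {x ∈ ℝ₊ⁿ : Σx_i = 1}. Then (λ(x̄), x̄) solves the tensor generalized eigenvalue complementarity problem with K = ℝ₊ⁿ: x̄ ≥ 0, λ(x̄)ℬx̄^{m−1} − 𝒜x̄^{m−1} ≥ 0, and ⟨x̄, λ(x̄)ℬx̄^{m−1} − 𝒜x̄^{m−1}⟩ = 0. -/
open Finset

noncomputable def tpow {m n : ℕ} (A : (Fin m → Fin n) → ℝ) (x : Fin n → ℝ) : ℝ :=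
  ∑ i : Fin m → Fin n, A i * ∏ k, x (i k)

noncomputable def tmap {m n : ℕ} [NeZero m] (A : (Fin m → Fin n) → ℝ) (x : Fin n → ℝ)
    (i : Fin n) : ℝ :=
  ∑ j : Fin m → Fin n, if j 0 = i then A j * ∏ k ∈ Finset.univ.erase (0 : Fin m), x (j k) else 0

def TSymm {m n : ℕ} (A : (Fin m → Fin n) → ℝ) : Prop :=
  ∀ (σ : Equiv.Perm (Fin m)) (i : Fin m → Fin n), A (i ∘ σ) = A i


lemma tmap_dot {m n : ℕ} [NeZero m] (A : (Fin m → Fin n) → ℝ) (x : Fin n → ℝ) :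
    ∑ i, x i * tmap A x i = tpow A x := by
  unfold tmap tpow
  simp only [Finset.mul_sum]
  rw [Finset.sum_comm]
  refine Finset.sum_congr rfl fun j _ => ?_
  simp only [mul_ite, mul_zero]
  rw [Finset.sum_ite_eq Finset.univ (j 0) (fun i => x i * (A j * ∏ k ∈ Finset.univ.erase (0 : Fin m), x (j k)))]
  simp only [Finset.mem_univ, if_true]
  rw [← Finset.mul_prod_erase Finset.univ (fun k => x (j k)) (Finset.mem_univ (0 : Fin m))]
  ring

/-- a KKT point of the Rayleigh quotient over the simplex solves the
symmetric TGEiCP with K = ℝ₊ⁿ. -/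
theorem kkt_point_solves_tgeicp {m n : ℕ} [NeZero m] (A B : (Fin m → Fin n) → ℝ)
    (hA : TSymm A) (hB : TSymm B)
    (hBcop : ∀ x : Fin n → ℝ, (∀ i, 0 ≤ x i) → x ≠ 0 → 0 < tpow B x)
    (x : Fin n → ℝ) (hx0 : ∀ i, 0 ≤ x i) (hx1 : ∑ i, x i = 1)
    (α : Fin n → ℝ) (β : ℝ) (hα : ∀ i, 0 ≤ α i) (hαx : ∑ i, α i * x i = 0)
    (hKKT : ∀ i, -((m : ℝ) / tpow B x *
        (tmap A x i - (tpow A x / tpow B x) * tmap B x i)) = α i + β) :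
    (∀ i, 0 ≤ (tpow A x / tpow B x) * tmap B x i - tmap A x i) ∧
    ∑ i, x i * ((tpow A x / tpow B x) * tmap B x i - tmap A x i) = 0 := by
  have hm : (0:ℝ) < m := Nat.cast_pos.mpr (Nat.pos_of_ne_zero (NeZero.ne m))
  have hxne : x ≠ 0 := by
    intro h
    rw [h] at hx1
    simp at hx1
  have hBpos : 0 < tpow B x := hBcop x hx0 hxne
  set lam := tpow A x / tpow B x with hlam
  have key : ∀ i, lam * tmap B x i - tmap A x i = tpow B x / m * (α i + β) := by
    intro i
    have h := hKKT i
    field_simp at h ⊢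
    nlinarith [h]
  have hsum0 : ∑ i, x i * (lam * tmap B x i - tmap A x i) = 0 := by
    have hdB := tmap_dot B x
    have hdA := tmap_dot A x
    have : ∑ i, x i * (lam * tmap B x i - tmap A x i)
        = lam * (∑ i, x i * tmap B x i) - ∑ i, x i * tmap A x i := by
      rw [Finset.mul_sum, ← Finset.sum_sub_distrib]
      refine Finset.sum_congr rfl fun i _ => by ring
    rw [this, hdA, hdB, hlam, div_mul_cancel₀ _ (ne_of_gt hBpos), sub_self]
  have h1 : tpow B x / m * β = 0 := by
    have h := hsum0
    rw [Finset.sum_congr rfl (fun i _ => by rw [key i])] at h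
    rw [Finset.sum_congr rfl (fun i _ => show x i * (tpow B x / m * (α i + β))
          = tpow B x / m * (α i * x i) + tpow B x / m * β * x i from by ring),
        Finset.sum_add_distrib, ← Finset.mul_sum, ← Finset.mul_sum, hαx, hx1,
        mul_zero, mul_one, zero_add] at h
    exact h
  have hβ : β = 0 := by
    rcases mul_eq_zero.mp h1 with h | h
    · exact absurd h (div_ne_zero (ne_of_gt hBpos) (ne_of_gt hm))
    · exact h
  constructor
  · intro i
    have := key i
    rw [hβ, add_zero] at this
    have hpos : 0 ≤ tpow B x / m * α i := mul_nonneg (le_of_lt (div_pos hBpos hm)) (hα i)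
    linarith [hα i]
  · exact hsum0
end

section
/- Let 𝒜, ℬ be symmetric m-th order n-dimensional tensors with ℬ strictly copositive. Then the largest Pareto-eigenvalue λ^max of (𝒜, ℬ) equals the maximum of λ(x) = 𝒜x^m/ℬx^m over the simplex S = {x ∈ ℝ₊ⁿ : Σx_i = 1}. -/
open Finset

/-!
The Rayleigh quotient `λ(x) = 𝒜xᵐ / ℬxᵐ` is continuous on the compact simplex, so it attains
its maximum `L` at some `x₀`; by homogeneity `𝒞 := Lℬ - 𝒜` then satisfies `𝒞yᵐ ≥ 0` on the whole
nonnegative orthant, with equality at `x₀`. For a symmetric tensor the partial derivatives of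
`y ↦ 𝒞yᵐ` are the entries of `m 𝒞yᵐ⁻¹`, so one-sided differentiation of this minimum along the
coordinate directions gives `𝒞x₀ᵐ⁻¹ ≥ 0`, and Euler's identity `⟨x, 𝒞xᵐ⁻¹⟩ = 𝒞xᵐ` gives
complementarity: `L` is a Pareto eigenvalue. Conversely, complementarity at a Pareto eigenpair
`(λ, x)` says exactly `λ = λ(x)`, and `λ(x) ≤ L` by homogeneity.
-/

lemma HasDerivAt.nonneg_of_isMinOn_Ici {φ : ℝ → ℝ} {d a : ℝ} (hd : HasDerivAt φ d a)
    (hmin : IsMinOn φ (Set.Ici a) a) : 0 ≤ d := by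
  have h1 : (1 : ℝ) ∈ posTangentConeAt (Set.Ici a) a :=
    mem_posTangentConeAt_of_segment_subset <| by
      rw [segment_eq_Icc (by linarith)]
      exact Set.Icc_subset_Ici_self
  simpa using hmin.localize.hasFDerivWithinAt_nonneg hd.hasFDerivAt.hasFDerivWithinAt h1

section Tensor

variable {m n : ℕ}

lemma tpow_smul (A : (Fin m → Fin n) → ℝ) (c : ℝ) (x : Fin n → ℝ) :
    tpow A (c • x) = c ^ m * tpow A x := by
  simp only [tpow, Finset.mul_sum, Pi.smul_apply, smul_eq_mul, Finset.prod_mul_distrib,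
    Finset.prod_const, Finset.card_univ, Fintype.card_fin]
  exact Finset.sum_congr rfl fun _ _ => by ring

lemma tpow_smul_sub (A B : (Fin m → Fin n) → ℝ) (c : ℝ) (x : Fin n → ℝ) :
    tpow (c • B - A) x = c * tpow B x - tpow A x := by
  simp only [tpow, Finset.mul_sum, ← Finset.sum_sub_distrib, Pi.sub_apply, Pi.smul_apply,
    smul_eq_mul]
  exact Finset.sum_congr rfl fun _ _ => by ring

lemma continuous_tpow (A : (Fin m → Fin n) → ℝ) : Continuous (tpow A) := by
  unfold tpow
  fun_prop

lemma TSymm.smul_sub {A B : (Fin m → Fin n) → ℝ} (hA : TSymm A) (hB : TSymm B) (c : ℝ) :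
    TSymm (c • B - A) := fun σ i => by
  simp only [Pi.sub_apply, Pi.smul_apply, hA σ i, hB σ i]

lemma hasDerivAt_tpow_add_smul_single (A : (Fin m → Fin n) → ℝ) (x : Fin n → ℝ) (i : Fin n) :
    HasDerivAt (fun t : ℝ => tpow A (x + t • (Pi.single i 1 : Fin n → ℝ)))
      (∑ k, ∑ j : Fin m → Fin n,
        if j k = i then A j * ∏ l ∈ Finset.univ.erase k, x (j l) else 0) 0 := by
  have hprod (j : Fin m → Fin n) :
      HasDerivAt (fun t : ℝ => ∏ k, (x + t • (Pi.single i 1 : Fin n → ℝ)) (j k))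
        (∑ k, (∏ l ∈ Finset.univ.erase k, x (j l)) * (Pi.single i 1 : Fin n → ℝ) (j k)) 0 := by
    simpa using HasDerivAt.fun_finsetProd (u := Finset.univ) fun k _ =>
      ((hasDerivAt_id (0 : ℝ)).smul_const ((Pi.single i 1 : Fin n → ℝ) (j k))).const_add _
  refine (HasDerivAt.fun_sum (u := Finset.univ) fun j _ =>
    (hprod j).const_mul (A j)).congr_deriv ?_
  rw [Finset.sum_comm]
  refine Finset.sum_congr rfl fun j _ => ?_
  rw [Finset.mul_sum]
  refine Finset.sum_congr rfl fun k _ => ?_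
  rw [Pi.single_apply]
  split_ifs <;> ring

variable [NeZero m]

@[simp]
lemma tpow_zero (A : (Fin m → Fin n) → ℝ) : tpow A 0 = 0 := by
  simpa [zero_pow (NeZero.ne m)] using tpow_smul A 0 0

lemma tmap_smul_sub (A B : (Fin m → Fin n) → ℝ) (c : ℝ) (x : Fin n → ℝ) (i : Fin n) :
    tmap (c • B - A) x i = c * tmap B x i - tmap A x i := by
  simp only [tmap, Finset.mul_sum, ← Finset.sum_sub_distrib, Pi.sub_apply, Pi.smul_apply,
    smul_eq_mul]
  refine Finset.sum_congr rfl fun _ _ => ?_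
  split_ifs <;> ring

lemma sum_mul_tmap (A : (Fin m → Fin n) → ℝ) (x : Fin n → ℝ) :
    ∑ i, x i * tmap A x i = tpow A x := by
  simp only [tmap, tpow, Finset.mul_sum, mul_ite, mul_zero]
  rw [Finset.sum_comm]
  refine Finset.sum_congr rfl fun j _ => ?_
  rw [Finset.sum_ite_eq, if_pos (Finset.mem_univ _),
    ← Finset.mul_prod_erase Finset.univ (fun k => x (j k)) (Finset.mem_univ 0)]
  ring

lemma TSymm.sum_ite_prod_erase_eq_tmap {A : (Fin m → Fin n) → ℝ} (hA : TSymm A)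
    (x : Fin n → ℝ) (i : Fin n) (k : Fin m) :
    ∑ j : Fin m → Fin n, (if j k = i then A j * ∏ l ∈ Finset.univ.erase k, x (j l) else 0) =
      tmap A x i := by
  set σ := Equiv.swap 0 k
  refine Fintype.sum_equiv (σ.symm.arrowCongr (Equiv.refl _)) _ _ fun j => ?_
  have hj : σ.symm.arrowCongr (Equiv.refl _) j = j ∘ σ := by ext; simp
  rw [hj, hA]
  simp only [Function.comp_apply, σ, Equiv.swap_apply_left]
  congr 2
  exact (Finset.prod_equiv σ (fun l => by simp [σ, Equiv.swap_apply_eq_iff]) fun _ _ => rfl).symm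

lemma TSymm.hasDerivAt_tpow_add_smul_single {A : (Fin m → Fin n) → ℝ} (hA : TSymm A)
    (x : Fin n → ℝ) (i : Fin n) :
    HasDerivAt (fun t : ℝ => tpow A (x + t • (Pi.single i 1 : Fin n → ℝ)))
      (m * tmap A x i) 0 := by
  simpa [hA.sum_ite_prod_erase_eq_tmap] using _root_.hasDerivAt_tpow_add_smul_single A x i

lemma TSymm.tmap_nonneg_of_isMinOn {C : (Fin m → Fin n) → ℝ} (hC : TSymm C) {x : Fin n → ℝ}
    (hmin : IsMinOn (tpow C) (Set.Ici 0) x) (hx : 0 ≤ x) (i : Fin n) : 0 ≤ tmap C x i := by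
  have hline : IsMinOn (fun t : ℝ => tpow C (x + t • (Pi.single i 1 : Fin n → ℝ)))
      (Set.Ici 0) 0 := fun t (ht : 0 ≤ t) => by
    have hmem : 0 ≤ x + t • (Pi.single i 1 : Fin n → ℝ) :=
      add_nonneg hx (smul_nonneg ht (Pi.single_nonneg.2 zero_le_one))
    simpa using hmin hmem
  have hm : (0 : ℝ) < m := by exact_mod_cast Nat.pos_of_ne_zero (NeZero.ne m)
  exact nonneg_of_mul_nonneg_right
    ((hC.hasDerivAt_tpow_add_smul_single x i).nonneg_of_isMinOn_Ici hline) hm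

end Tensor

section Simplex

variable {𝕜 ι : Type*} [Field 𝕜] [LinearOrder 𝕜] [IsStrictOrderedRing 𝕜] [Fintype ι]

lemma ne_zero_of_mem_stdSimplex {x : ι → 𝕜} (hx : x ∈ stdSimplex 𝕜 ι) : x ≠ 0 := by
  rintro rfl
  simpa using hx.2

lemma inv_sum_smul_mem_stdSimplex {y : ι → 𝕜} (hy : 0 ≤ y) (hy0 : y ≠ 0) :
    (∑ i, y i)⁻¹ • y ∈ stdSimplex 𝕜 ι := by
  have hs : 0 < ∑ i, y i :=
    (Fintype.sum_nonneg hy).lt_of_ne' ((Fintype.sum_eq_zero_iff_of_nonneg hy).not.2 hy0)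
  refine ⟨fun i => mul_nonneg (inv_nonneg.2 hs.le) (hy i), ?_⟩
  simp only [Pi.smul_apply, smul_eq_mul, ← Finset.mul_sum, inv_mul_cancel₀ hs.ne']

end Simplex

variable {m n : ℕ}

def StrictlyCopositive (B : (Fin m → Fin n) → ℝ) : Prop :=
  ∀ x : Fin n → ℝ, 0 ≤ x → x ≠ 0 → 0 < tpow B x

def IsParetoEigenpair [NeZero m] (A B : (Fin m → Fin n) → ℝ) (lam : ℝ) (x : Fin n → ℝ) : Prop :=
  (∀ i, 0 ≤ x i) ∧ x ≠ 0 ∧ (∀ i, 0 ≤ lam * tmap B x i - tmap A x i) ∧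
    ∑ i, x i * (lam * tmap B x i - tmap A x i) = 0

noncomputable def rayleigh (A B : (Fin m → Fin n) → ℝ) (x : Fin n → ℝ) : ℝ :=
  tpow A x / tpow B x

section Rayleigh

variable {A B : (Fin m → Fin n) → ℝ}

lemma rayleigh_smul (A B : (Fin m → Fin n) → ℝ) {c : ℝ} (hc : c ≠ 0) (x : Fin n → ℝ) :
    rayleigh A B (c • x) = rayleigh A B x := by
  simp only [rayleigh, tpow_smul, mul_div_mul_left _ _ (pow_ne_zero m hc)]

lemma tpow_rayleigh_smul_sub_self {x : Fin n → ℝ} (hx : tpow B x ≠ 0) :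
    tpow (rayleigh A B x • B - A) x = 0 := by
  rw [tpow_smul_sub, rayleigh, div_mul_cancel₀ _ hx, sub_self]

lemma continuousOn_rayleigh_stdSimplex (hBcop : StrictlyCopositive B) :
    ContinuousOn (rayleigh A B) (stdSimplex ℝ (Fin n)) :=
  (continuous_tpow A).continuousOn.div (continuous_tpow B).continuousOn
    fun x hx => (hBcop x hx.1 (ne_zero_of_mem_stdSimplex hx)).ne'

lemma exists_isMaxOn_rayleigh (hn : 0 < n) (hBcop : StrictlyCopositive B) :
    ∃ x ∈ stdSimplex ℝ (Fin n), IsMaxOn (rayleigh A B) (stdSimplex ℝ (Fin n)) x :=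
  (isCompact_stdSimplex ℝ (Fin n)).exists_isMaxOn ⟨_, single_mem_stdSimplex ℝ ⟨0, hn⟩⟩
    (continuousOn_rayleigh_stdSimplex hBcop)

lemma rayleigh_le_of_isMaxOn {x₀ y : Fin n → ℝ}
    (hmax : IsMaxOn (rayleigh A B) (stdSimplex ℝ (Fin n)) x₀) (hy : 0 ≤ y) (hy0 : y ≠ 0) :
    rayleigh A B y ≤ rayleigh A B x₀ := by
  have hs : ∑ i, y i ≠ 0 := (Fintype.sum_eq_zero_iff_of_nonneg hy).not.2 hy0
  rw [← rayleigh_smul A B (inv_ne_zero hs)]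
  exact hmax (inv_sum_smul_mem_stdSimplex hy hy0)

variable [NeZero m]

lemma isMinOn_tpow_smul_sub_of_isMaxOn (hBcop : StrictlyCopositive B) {x₀ : Fin n → ℝ}
    (hx₀ : x₀ ∈ stdSimplex ℝ (Fin n))
    (hmax : IsMaxOn (rayleigh A B) (stdSimplex ℝ (Fin n)) x₀) :
    IsMinOn (tpow (rayleigh A B x₀ • B - A)) (Set.Ici 0) x₀ := by
  refine isMinOn_iff.2 fun y (hy : 0 ≤ y) => ?_
  rw [tpow_rayleigh_smul_sub_self (hBcop x₀ hx₀.1 (ne_zero_of_mem_stdSimplex hx₀)).ne',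
    tpow_smul_sub, sub_nonneg]
  rcases eq_or_ne y 0 with rfl | hy0
  · simp
  · rw [← div_le_iff₀ (hBcop y hy hy0)]
    exact rayleigh_le_of_isMaxOn hmax hy hy0

lemma isParetoEigenpair_of_isMinOn (hA : TSymm A) (hB : TSymm B) {lam : ℝ} {x : Fin n → ℝ}
    (hmin : IsMinOn (tpow (lam • B - A)) (Set.Ici 0) x) (hzero : tpow (lam • B - A) x = 0)
    (hx : 0 ≤ x) (hx0 : x ≠ 0) : IsParetoEigenpair A B lam x := by
  refine ⟨hx, hx0, fun i => ?_, ?_⟩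
  · rw [← tmap_smul_sub]
    exact (hA.smul_sub hB lam).tmap_nonneg_of_isMinOn hmin hx i
  · simp only [← tmap_smul_sub, sum_mul_tmap, hzero]

lemma IsParetoEigenpair.eq_rayleigh {lam : ℝ} {x : Fin n → ℝ} (h : IsParetoEigenpair A B lam x)
    (hBx : tpow B x ≠ 0) : lam = rayleigh A B x := by
  have h0 := h.2.2.2
  simp only [← tmap_smul_sub, sum_mul_tmap, tpow_smul_sub, sub_eq_zero] at h0
  rw [rayleigh, eq_div_iff hBx, h0]

end Rayleigh

/-- the largest Pareto-eigenvalue of (𝒜,ℬ) equals the maximum of the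
generalized Rayleigh quotient over the standard simplex. -/
theorem largest_pareto_eigenvalue_eq_max_rayleigh {m n : ℕ} [NeZero m] (hn : 0 < n)
    (A B : (Fin m → Fin n) → ℝ) (hA : TSymm A) (hB : TSymm B)
    (hBcop : ∀ x : Fin n → ℝ, (∀ i, 0 ≤ x i) → x ≠ 0 → 0 < tpow B x) :
    ∃ L : ℝ,
      IsGreatest {lam : ℝ | ∃ x : Fin n → ℝ, (∀ i, 0 ≤ x i) ∧ x ≠ 0 ∧
        (∀ i, 0 ≤ lam * tmap B x i - tmap A x i) ∧
        ∑ i, x i * (lam * tmap B x i - tmap A x i) = 0} L ∧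
      IsGreatest ((fun x => tpow A x / tpow B x) ''
        {x : Fin n → ℝ | (∀ i, 0 ≤ x i) ∧ ∑ i, x i = 1}) L := by
  obtain ⟨x₀, hx₀, hmax⟩ := exists_isMaxOn_rayleigh (A := A) hn hBcop
  have hx₀0 := ne_zero_of_mem_stdSimplex hx₀
  have hpair : IsParetoEigenpair A B (rayleigh A B x₀) x₀ :=
    isParetoEigenpair_of_isMinOn hA hB (isMinOn_tpow_smul_sub_of_isMaxOn hBcop hx₀ hmax)
      (tpow_rayleigh_smul_sub_self (hBcop x₀ hx₀.1 hx₀0).ne') hx₀.1 hx₀0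
  refine ⟨rayleigh A B x₀, ⟨⟨x₀, hpair⟩, ?_⟩, ⟨x₀, hx₀, rfl⟩, ?_⟩
  · rintro lam ⟨x, hx : IsParetoEigenpair A B lam x⟩
    rw [hx.eq_rayleigh (hBcop x hx.1 hx.2.1).ne']
    exact rayleigh_le_of_isMaxOn hmax hx.1 hx.2.1
  · rintro _ ⟨x, hx, rfl⟩
    exact hmax hx
end

section
/- Let (λ, x) be any solution of the Pareto eigenvalue complementarity problem for an m-th order n-dimensional tensor 𝒜 with ℬ = ℐ (the identity tensor): x ≥ 0, x ≠ 0, λx^{[m−1]} − 𝒜x^{m−1} ≥ 0, ⟨x, λx^{[m−1]} − 𝒜x^{m−1}⟩ = 0. Then |λ| ≤ n^{(m−2)/2} ‖𝒜‖_F, where ‖𝒜‖_F is the Frobenius norm of 𝒜. -/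
open Finset

/-- Frobenius-norm bound on Pareto eigenvalues (ℬ = ℐ). -/
theorem pareto_eigenvalue_frobenius_bound {m n : ℕ} [NeZero m] (hm : 2 ≤ m)
    (A : (Fin m → Fin n) → ℝ) (lam : ℝ) (x : Fin n → ℝ)
    (hx0 : ∀ i, 0 ≤ x i) (hx : x ≠ 0)
    (h1 : ∀ i, 0 ≤ lam * x i ^ (m - 1) - tmap A x i)
    (h2 : ∑ i, x i * (lam * x i ^ (m - 1) - tmap A x i) = 0) :
    |lam| ≤ (n : ℝ) ^ (((m : ℝ) - 2) / 2) * Real.sqrt (∑ j : Fin m → Fin n, A j ^ 2) := by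
  classical
  -- notation
  set s := ∑ i, x i ^ m with hs
  set t := ∑ i, x i ^ 2 with ht
  have hm1 : m - 1 + 1 = m := by omega
  have hn : 0 < n := by
    rcases Nat.eq_zero_or_pos n with h | h
    · subst h; exact absurd (funext fun i => i.elim0) hx
    · exact h
  have hnR : (0 : ℝ) < n := by exact_mod_cast hn
  -- positivity of s and t
  obtain ⟨i0, hi0⟩ : ∃ i, x i ≠ 0 := Function.ne_iff.mp hx
  have hxi0 : 0 < x i0 := lt_of_le_of_ne (hx0 i0) (Ne.symm hi0)
  have hspos : 0 < s := by
    refine Finset.sum_pos' (fun i _ => pow_nonneg (hx0 i) m) ⟨i0, Finset.mem_univ _, ?_⟩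
    positivity
  have htnn : 0 ≤ t := Finset.sum_nonneg fun i _ => sq_nonneg _
  -- step 1 : ∑ x i * tmap = tpow
  have hstep1 : ∑ i, x i * tmap A x i = tpow A x := by
    unfold tmap tpow
    simp_rw [Finset.mul_sum, mul_ite, mul_zero]
    rw [Finset.sum_comm]
    refine Finset.sum_congr rfl fun j _ => ?_
    rw [Finset.sum_ite_eq Finset.univ (j 0)
      (fun i => x i * (A j * ∏ k ∈ Finset.univ.erase (0 : Fin m), x (j k)))]
    simp only [Finset.mem_univ, if_true]
    rw [← Finset.mul_prod_erase Finset.univ (fun k => x (j k)) (Finset.mem_univ (0 : Fin m))]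
    ring
  -- step 2 : lam * s = tpow A x
  have hstep2 : lam * s = tpow A x := by
    have e : ∑ i, x i * (lam * x i ^ (m - 1) - tmap A x i)
        = lam * s - ∑ i, x i * tmap A x i := by
      rw [hs, Finset.mul_sum, ← Finset.sum_sub_distrib]
      refine Finset.sum_congr rfl fun i _ => ?_
      have : x i ^ m = x i * x i ^ (m - 1) := by
        rw [← pow_succ', hm1]
      rw [this]; ring
    rw [e, hstep1] at h2
    linarith
  -- step 3 : Cauchy-Schwarz
  have hCS : (tpow A x) ^ 2 ≤ (∑ j : Fin m → Fin n, A j ^ 2) * t ^ m := by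
    have h := Finset.sum_mul_sq_le_sq_mul_sq Finset.univ A (fun j => ∏ k, x (j k))
    have e : ∑ j : Fin m → Fin n, (∏ k, x (j k)) ^ 2 = t ^ m := by
      rw [ht, Fintype.sum_pow (fun i => x i ^ 2) m]
      exact Finset.sum_congr rfl fun j _ => (Finset.prod_pow _ _ _).symm
    rw [tpow]
    calc (∑ j : Fin m → Fin n, A j * ∏ k, x (j k)) ^ 2
        ≤ (∑ j : Fin m → Fin n, A j ^ 2) * ∑ j : Fin m → Fin n, (∏ k, x (j k)) ^ 2 := h
      _ = (∑ j : Fin m → Fin n, A j ^ 2) * t ^ m := by rw [e]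
  -- step 4 : power mean inequality : t ^ (m/2) ≤ n ^ ((m-2)/2) * s
  have hPM : t ^ ((m : ℝ) / 2) ≤ (n : ℝ) ^ (((m : ℝ) - 2) / 2) * s := by
    have hp : (1 : ℝ) ≤ (m : ℝ) / 2 := by
      have : (2 : ℝ) ≤ (m : ℝ) := by exact_mod_cast hm
      linarith
    have h := Real.rpow_arith_mean_le_arith_mean_rpow Finset.univ
      (fun _ : Fin n => (n : ℝ)⁻¹) (fun i => x i ^ 2)
      (fun i _ => by positivity)
      (by simp [Finset.sum_const, Finset.card_univ]; field_simp)
      (fun i _ => sq_nonneg _) hp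
    have eL : ∑ i, (n : ℝ)⁻¹ * x i ^ 2 = (n : ℝ)⁻¹ * t := by
      rw [ht, Finset.mul_sum]
    have eR : ∑ i, (n : ℝ)⁻¹ * (x i ^ 2) ^ ((m : ℝ) / 2) = (n : ℝ)⁻¹ * s := by
      rw [hs, Finset.mul_sum]
      refine Finset.sum_congr rfl fun i _ => ?_
      congr 1
      rw [← Real.rpow_natCast (x i) 2, ← Real.rpow_natCast (x i) m,
        ← Real.rpow_mul (hx0 i)]
      congr 1; push_cast; ring
    rw [eL, eR, Real.mul_rpow (by positivity) htnn] at h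
    have hinv : ((n : ℝ)⁻¹) ^ ((m : ℝ) / 2) = ((n : ℝ) ^ ((m : ℝ) / 2))⁻¹ :=
      Real.inv_rpow (le_of_lt hnR) _
    rw [hinv] at h
    have hnp : (0 : ℝ) < (n : ℝ) ^ ((m : ℝ) / 2) := Real.rpow_pos_of_pos hnR _
    rw [inv_mul_le_iff₀ hnp] at h
    calc t ^ ((m : ℝ) / 2) ≤ (n : ℝ) ^ ((m : ℝ) / 2) * ((n : ℝ)⁻¹ * s) := h
      _ = (n : ℝ) ^ (((m : ℝ) - 2) / 2) * s := by
          rw [← mul_assoc]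
          congr 1
          rw [← Real.rpow_neg_one (n : ℝ), ← Real.rpow_add hnR]
          congr 1; ring
  -- step 5 : combine
  have hF : 0 ≤ ∑ j : Fin m → Fin n, A j ^ 2 := Finset.sum_nonneg fun j _ => sq_nonneg _
  have habs : |lam| * s ≤ Real.sqrt (∑ j : Fin m → Fin n, A j ^ 2) * t ^ ((m : ℝ) / 2) := by
    have : |lam * s| = |lam| * s := by
      rw [abs_mul, abs_of_pos hspos]
    rw [← this, hstep2, ← Real.sqrt_sq_eq_abs]
    have e : t ^ ((m : ℝ) / 2) = Real.sqrt (t ^ m) := by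
      rw [Real.sqrt_eq_rpow, ← Real.rpow_natCast t m, ← Real.rpow_mul htnn]
      congr 1; ring
    rw [e, ← Real.sqrt_mul hF]
    exact Real.sqrt_le_sqrt hCS
  have final : |lam| * s ≤
      ((n : ℝ) ^ (((m : ℝ) - 2) / 2) * Real.sqrt (∑ j : Fin m → Fin n, A j ^ 2)) * s := by
    calc |lam| * s ≤ Real.sqrt (∑ j : Fin m → Fin n, A j ^ 2) * t ^ ((m : ℝ) / 2) := habs
      _ ≤ Real.sqrt (∑ j : Fin m → Fin n, A j ^ 2) *
          ((n : ℝ) ^ (((m : ℝ) - 2) / 2) * s) := by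
          exact mul_le_mul_of_nonneg_left hPM (Real.sqrt_nonneg _)
      _ = ((n : ℝ) ^ (((m : ℝ) - 2) / 2) * Real.sqrt (∑ j : Fin m → Fin n, A j ^ 2)) * s := by
          ring
  exact le_of_mul_le_mul_right final hspos
end

section
/- Let 𝒜, ℬ be m-th order n-dimensional real tensors. A real number λ is a Pareto-eigenvalue of (𝒜, ℬ) if and only if there exist a nonempty subset J ⊆ {1,…,n} and a vector w ∈ ℝ₊₊^{|J|} such that 𝒜_J w^{m−1} = λ ℬ_J w^{m−1} and, for every i ∈ {1,…,n} \ J, Σ_{i₂,…,i_m ∈ J} (λ b_{i i₂⋯i_m} − a_{i i₂⋯i_m}) w_{i₂}⋯w_{i_m} ≥ 0. In that case, the vector x with x_i = w_i for i ∈ J and x_i = 0 otherwise is an associated Pareto-eigenvector. -/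
open Finset

/-- combinatorial characterization of Pareto-eigenvalues of (𝒜,ℬ) via
principal sub-tensors (the sub-tensor system is encoded by the zero-extension x of w). -/
theorem pareto_eigenvalue_characterization {m n : ℕ} [NeZero m]
    (A B : (Fin m → Fin n) → ℝ) (lam : ℝ) :
    (∃ x : Fin n → ℝ, (∀ i, 0 ≤ x i) ∧ x ≠ 0 ∧
      (∀ i, 0 ≤ lam * tmap B x i - tmap A x i) ∧
      ∑ i, x i * (lam * tmap B x i - tmap A x i) = 0)
    ↔ ∃ J : Finset (Fin n), J.Nonempty ∧ ∃ x : Fin n → ℝ,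
        (∀ i ∈ J, 0 < x i) ∧ (∀ i ∉ J, x i = 0) ∧
        (∀ i ∈ J, tmap A x i = lam * tmap B x i) ∧
        (∀ i ∉ J, 0 ≤ lam * tmap B x i - tmap A x i) := by
  constructor
  · rintro ⟨x, hx0, hxne, hpos, hsum⟩
    refine ⟨Finset.univ.filter (fun i => 0 < x i), ?_, x, ?_, ?_, ?_, ?_⟩
    · obtain ⟨i, hi⟩ : ∃ i, x i ≠ 0 := by
        by_contra h; push_neg at h; exact hxne (funext h)
      exact ⟨i, Finset.mem_filter.2 ⟨Finset.mem_univ _, lt_of_le_of_ne (hx0 i) (Ne.symm hi)⟩⟩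
    · intro i hi; exact (Finset.mem_filter.1 hi).2
    · intro i hi
      simp only [Finset.mem_filter, Finset.mem_univ, true_and, not_lt] at hi
      exact le_antisymm hi (hx0 i)
    · intro i hi
      have h := (Finset.sum_eq_zero_iff_of_nonneg
        (fun j _ => mul_nonneg (hx0 j) (hpos j))).1 hsum i (Finset.mem_univ i)
      have hxi := (Finset.mem_filter.1 hi).2
      rcases mul_eq_zero.1 h with h1 | h2
      · exact absurd h1 (ne_of_gt hxi)
      · linarith
    · intro i _; exact hpos i
  · rintro ⟨J, ⟨j, hj⟩, x, hpos, hzero, heig, hineq⟩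
    refine ⟨x, ?_, ?_, ?_, ?_⟩
    · intro i; by_cases h : i ∈ J
      · exact (hpos i h).le
      · exact (hzero i h).ge
    · intro h; have := hpos j hj; rw [h] at this; simp at this
    · intro i; by_cases h : i ∈ J
      · rw [heig i h]; simp
      · exact hineq i h
    · apply Finset.sum_eq_zero
      intro i _
      by_cases h : i ∈ J
      · rw [heig i h]; ring
      · rw [hzero i h]; ring
end

section
/- Let 𝒜 be an m-th order n-dimensional nonnegative tensor (all entries ≥ 0). If 𝒜 has two strictly positive eigenvectors, i.e., there exist x, y ∈ ℝ₊₊ⁿ and λ₁, λ₂ ∈ ℝ with 𝒜x^{m−1} = λ₁x^{[m−1]} and 𝒜y^{m−1} = λ₂y^{[m−1]}, then λ₁ = λ₂. -/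
open Finset

private lemma aux_le {m n : ℕ} [NeZero m] (hm : 2 ≤ m)
    (hn : 0 < n) (A : (Fin m → Fin n) → ℝ) (hA : ∀ i, 0 ≤ A i)
    (x y : Fin n → ℝ) (hx : ∀ i, 0 < x i) (hy : ∀ i, 0 < y i) (lam1 lam2 : ℝ)
    (h1 : ∀ i, tmap A x i = lam1 * x i ^ (m - 1))
    (h2 : ∀ i, tmap A y i = lam2 * y i ^ (m - 1)) :
    lam1 ≤ lam2 := by
  haveI : Nonempty (Fin n) := ⟨⟨0, hn⟩⟩
  obtain ⟨i₀, -, hmax⟩ := Finset.exists_max_image (Finset.univ : Finset (Fin n))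
    (fun i => x i / y i) Finset.univ_nonempty
  set t : ℝ := x i₀ / y i₀ with ht
  have htpos : 0 < t := div_pos (hx i₀) (hy i₀)
  have hle : ∀ i, x i ≤ t * y i := by
    intro i
    have := hmax i (Finset.mem_univ i)
    rw [div_le_iff₀ (hy i)] at this
    linarith [this]
  have hcard : (Finset.univ.erase (0 : Fin m)).card = m - 1 := by
    rw [Finset.card_erase_of_mem (Finset.mem_univ _), Finset.card_univ, Fintype.card_fin]
  have key : tmap A x i₀ ≤ lam2 * x i₀ ^ (m - 1) := by
    have step1 : tmap A x i₀ ≤ tmap A (fun i => t * y i) i₀ := by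
      unfold tmap
      apply Finset.sum_le_sum
      intro j _
      by_cases hj : j 0 = i₀
      · simp only [hj, if_true]
        apply mul_le_mul_of_nonneg_left _ (hA j)
        apply Finset.prod_le_prod (fun k _ => (hx _).le) (fun k _ => hle _)
      · simp [hj]
    have step2 : tmap A (fun i => t * y i) i₀ = t ^ (m - 1) * tmap A y i₀ := by
      unfold tmap
      rw [Finset.mul_sum]
      apply Finset.sum_congr rfl
      intro j _
      by_cases hj : j 0 = i₀
      · simp only [hj, if_true, Finset.prod_mul_distrib, Finset.prod_const, hcard]
        ring
      · simp [hj]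
    have hty : t * y i₀ = x i₀ := div_mul_cancel₀ _ (hy i₀).ne'
    calc tmap A x i₀ ≤ t ^ (m - 1) * tmap A y i₀ := step1.trans_eq step2
    _ = lam2 * (t * y i₀) ^ (m - 1) := by rw [h2, mul_pow]; ring
    _ = lam2 * x i₀ ^ (m - 1) := by rw [hty]
  rw [h1] at key
  exact le_of_mul_le_mul_right key (pow_pos (hx i₀) _)

/-- a nonnegative tensor has at most one eigenvalue associated with
strictly positive eigenvectors. -/
theorem nonneg_tensor_unique_positive_eigenvalue {m n : ℕ} [NeZero m] (hm : 2 ≤ m)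
    (hn : 0 < n) (A : (Fin m → Fin n) → ℝ) (hA : ∀ i, 0 ≤ A i)
    (x y : Fin n → ℝ) (hx : ∀ i, 0 < x i) (hy : ∀ i, 0 < y i) (lam1 lam2 : ℝ)
    (h1 : ∀ i, tmap A x i = lam1 * x i ^ (m - 1))
    (h2 : ∀ i, tmap A y i = lam2 * y i ^ (m - 1)) :
    lam1 = lam2 := by
  exact le_antisymm
    (aux_le hm hn A hA x y hx hy lam1 lam2 h1 h2)
    (aux_le hm hn A hA y x hy hx lam2 lam1 h2 h1)
end

section
/- Let 𝒜 be an m-th order n-dimensional tensor such that −𝒜 is a Z-tensor (all off-diagonal entries of 𝒜 are nonnegative). Then 𝒜 admits at most one strict Pareto-eigenvalue, i.e., at most one λ ∈ ℝ for which there exists x ∈ ℝ₊₊ⁿ with 𝒜x^{m−1} = λx^{[m−1]}. -/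
open Finset

lemma negZ_aux {m n : ℕ} [NeZero m] (hn : 0 < n)
    (A : (Fin m → Fin n) → ℝ)
    (hA : ∀ i : Fin m → Fin n, (∃ k k', i k ≠ i k') → 0 ≤ A i) (lam1 lam2 : ℝ)
    (x y : Fin n → ℝ) (hx : ∀ i, 0 < x i) (hy : ∀ i, 0 < y i)
    (hex : ∀ i, tmap A x i = lam1 * x i ^ (m - 1))
    (hey : ∀ i, tmap A y i = lam2 * y i ^ (m - 1)) : lam2 ≤ lam1 := by
  haveI : Nonempty (Fin n) := ⟨⟨0, hn⟩⟩
  obtain ⟨i, -, hi⟩ := Finset.exists_min_image Finset.univ (fun k => x k / y k)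
    ⟨Classical.arbitrary (Fin n), Finset.mem_univ _⟩
  set t := x i / y i with ht
  have htpos : 0 < t := div_pos (hx i) (hy i)
  have hxy : ∀ k, t * y k ≤ x k := by
    intro k
    have h := hi k (Finset.mem_univ k)
    calc t * y k ≤ (x k / y k) * y k := mul_le_mul_of_nonneg_right h (hy k).le
      _ = x k := div_mul_cancel₀ _ (hy k).ne'
  have hxi : x i = t * y i := (div_mul_cancel₀ _ (hy i).ne').symm
  have hcard : (Finset.univ.erase (0 : Fin m)).card = m - 1 := by
    rw [Finset.card_erase_of_mem (Finset.mem_univ _), Finset.card_univ, Fintype.card_fin]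
  have key : t ^ (m - 1) * tmap A y i ≤ tmap A x i := by
    unfold tmap
    rw [Finset.mul_sum]
    apply Finset.sum_le_sum
    intro j _
    by_cases hj : j 0 = i
    · simp only [hj, if_true]
      by_cases hc : ∃ k k', j k ≠ j k'
      · have hAj := hA j hc
        have hprod : t ^ (m - 1) * ∏ k ∈ Finset.univ.erase (0 : Fin m), y (j k)
            ≤ ∏ k ∈ Finset.univ.erase (0 : Fin m), x (j k) := by
          have e1 : t ^ (m - 1) * ∏ k ∈ Finset.univ.erase (0 : Fin m), y (j k)
              = ∏ k ∈ Finset.univ.erase (0 : Fin m), (t * y (j k)) := by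
            rw [Finset.prod_mul_distrib, Finset.prod_const, hcard]
          rw [e1]
          exact Finset.prod_le_prod (fun k _ => mul_nonneg htpos.le (hy _).le)
            (fun k _ => hxy _)
        calc t ^ (m - 1) * (A j * ∏ k ∈ Finset.univ.erase (0 : Fin m), y (j k))
            = A j * (t ^ (m - 1) * ∏ k ∈ Finset.univ.erase (0 : Fin m), y (j k)) := by ring
          _ ≤ A j * ∏ k ∈ Finset.univ.erase (0 : Fin m), x (j k) :=
              mul_le_mul_of_nonneg_left hprod hAj
      · push_neg at hc
        have hji : ∀ k, j k = i := fun k => (hc k 0).trans hj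
        have ex : ∏ k ∈ Finset.univ.erase (0 : Fin m), x (j k) = x i ^ (m - 1) := by
          rw [Finset.prod_congr rfl (fun k _ => by rw [hji k]), Finset.prod_const, hcard]
        have ey : ∏ k ∈ Finset.univ.erase (0 : Fin m), y (j k) = y i ^ (m - 1) := by
          rw [Finset.prod_congr rfl (fun k _ => by rw [hji k]), Finset.prod_const, hcard]
        rw [ex, ey, hxi, mul_pow]
        exact le_of_eq (by ring)
    · simp [hj]
  have hxip : x i ^ (m - 1) = t ^ (m - 1) * y i ^ (m - 1) := by rw [hxi, mul_pow]
  rw [hex i, hey i, hxip] at key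
  have hpos : 0 < t ^ (m - 1) * y i ^ (m - 1) :=
    mul_pos (pow_pos htpos _) (pow_pos (hy i) _)
  have e : t ^ (m - 1) * (lam2 * y i ^ (m - 1)) = lam2 * (t ^ (m - 1) * y i ^ (m - 1)) := by ring
  rw [e] at key
  exact le_of_mul_le_mul_right key hpos

/-- if −𝒜 is a Z-tensor (all off-diagonal entries of 𝒜 nonnegative),
then 𝒜 admits at most one strict Pareto-eigenvalue. -/
theorem negZ_tensor_unique_strict_eigenvalue {m n : ℕ} [NeZero m] (hm : 2 ≤ m)
    (hn : 0 < n) (A : (Fin m → Fin n) → ℝ)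
    (hA : ∀ i : Fin m → Fin n, (∃ k k', i k ≠ i k') → 0 ≤ A i) (lam1 lam2 : ℝ)
    (h1 : ∃ x : Fin n → ℝ, (∀ i, 0 < x i) ∧ ∀ i, tmap A x i = lam1 * x i ^ (m - 1))
    (h2 : ∃ y : Fin n → ℝ, (∀ i, 0 < y i) ∧ ∀ i, tmap A y i = lam2 * y i ^ (m - 1)) :
    lam1 = lam2 := by
  obtain ⟨x, hx, hex⟩ := h1
  obtain ⟨y, hy, hey⟩ := h2
  exact le_antisymm (negZ_aux hn A hA lam2 lam1 y x hy hx hey hex)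
    (negZ_aux hn A hA lam1 lam2 x y hx hy hex hey)
end

section
/- Let 𝒜 be an m-th order n-dimensional tensor such that 𝒜 (or −𝒜) is a Z-tensor. Then 𝒜 has at most 2ⁿ − 1 Pareto eigenvalues. -/
/-!
Every Pareto eigenpair `(λ, x)` restricts to a strict eigenpair of the principal sub-tensor on the
support `J` of `x`, by complementarity. For a Z-tensor, two strict eigenpairs `(λ, x)`, `(μ, y)`
on the same support `J` have `λ = μ`: with `t = min_{i ∈ J} y i / x i` attained at `i₀`, we get
`t x ≤ y` with equality at `i₀`, and since the off-diagonal entries are nonpositive,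
`μ y_{i₀}^{m-1} = (𝒜 y^{m-1})_{i₀} ≤ t^{m-1} (𝒜 x^{m-1})_{i₀} = λ y_{i₀}^{m-1}`, so `μ ≤ λ`.
Hence the Pareto spectrum has at most one element per nonempty `J ⊆ {1,…,n}`.
-/

open Finset

theorem Finset.exists_card_le_of_subsingleton {α β : Type*} [Nonempty α] (F : Finset β)
    (P : α → β → Prop) (hP : ∀ J ∈ F, ∀ a b, P a J → P b J → a = b) :
    ∃ S : Finset α, S.card ≤ F.card ∧ {a | ∃ J ∈ F, P a J} ⊆ S := by
  classical
  refine ⟨F.image fun J => Classical.epsilon (P · J), card_image_le, ?_⟩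
  rintro a ⟨J, hJ, ha⟩
  exact mem_image.2 ⟨J, hJ, hP J hJ _ _ (Classical.epsilon_spec (p := (P · J)) ⟨a, ha⟩) ha⟩

section Tensor

variable {m n : ℕ}

def IsZTensor (A : (Fin m → Fin n) → ℝ) : Prop :=
  ∀ i : Fin m → Fin n, (∃ k k', i k ≠ i k') → A i ≤ 0

variable [NeZero m]

theorem prod_erase_zero_mul (x : Fin n → ℝ) (t : ℝ) (j : Fin m → Fin n) :
    ∏ k ∈ univ.erase (0 : Fin m), t * x (j k) = t ^ (m - 1) * ∏ k ∈ univ.erase 0, x (j k) := by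
  rw [prod_mul_distrib, prod_const, card_erase_of_mem (mem_univ _), card_univ, Fintype.card_fin]

theorem tmap_neg (A : (Fin m → Fin n) → ℝ) (x : Fin n → ℝ) (i : Fin n) :
    tmap (-A) x i = -tmap A x i := by
  rw [tmap, tmap, ← sum_neg_distrib]
  refine sum_congr rfl fun j _ => ?_
  split_ifs <;> simp only [Pi.neg_apply, neg_mul, neg_zero]

theorem IsZTensor.tmap_le_of_mul_le {A : (Fin m → Fin n) → ℝ} (hA : IsZTensor A)
    {x y : Fin n → ℝ} {t : ℝ} {i₀ : Fin n} (ht : 0 ≤ t) (hx : ∀ i, 0 ≤ x i)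
    (hle : ∀ i, t * x i ≤ y i) (heq : y i₀ = t * x i₀) :
    tmap A y i₀ ≤ t ^ (m - 1) * tmap A x i₀ := by
  rw [tmap, tmap, mul_sum]
  refine sum_le_sum fun j _ => ?_
  split_ifs with hj
  · rw [mul_left_comm, ← prod_erase_zero_mul]
    by_cases hdiag : ∃ k k', j k ≠ j k'
    · exact mul_le_mul_of_nonpos_left
        (prod_le_prod (fun k _ => mul_nonneg ht (hx _)) fun k _ => hle _) (hA j hdiag)
    · push Not at hdiag
      have hj_const : ∀ k, j k = i₀ := fun k => (hdiag k 0).trans hj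
      simp only [hj_const, heq, le_refl]
  · rw [mul_zero]

/-- As `x` vanishes off `J`, `tmap A x i` is `(𝒜_J x_J^{m-1})_i` for `i ∈ J`: this encodes a strict
Pareto eigenpair of the principal sub-tensor `𝒜_J`. -/
def IsEigenpairOn (A : (Fin m → Fin n) → ℝ) (J : Finset (Fin n)) (lam : ℝ) (x : Fin n → ℝ) :
    Prop :=
  (∀ i, 0 ≤ x i) ∧ (∀ i, x i ≠ 0 ↔ i ∈ J) ∧ ∀ i ∈ J, lam * x i ^ (m - 1) = tmap A x i

theorem IsEigenpairOn.neg {A : (Fin m → Fin n) → ℝ} {J : Finset (Fin n)} {lam : ℝ}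
    {x : Fin n → ℝ} (h : IsEigenpairOn A J lam x) : IsEigenpairOn (-A) J (-lam) x := by
  refine ⟨h.1, h.2.1, fun i hi => ?_⟩
  rw [tmap_neg, ← h.2.2 i hi, neg_mul]

theorem isEigenpairOn_support_of_complementarity {A : (Fin m → Fin n) → ℝ} {lam : ℝ}
    {x : Fin n → ℝ} (hx : ∀ i, 0 ≤ x i) (hge : ∀ i, 0 ≤ lam * x i ^ (m - 1) - tmap A x i)
    (hsum : ∑ i, x i * (lam * x i ^ (m - 1) - tmap A x i) = 0) :
    IsEigenpairOn A (univ.filter (x · ≠ 0)) lam x := by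
  have hzero := (sum_eq_zero_iff_of_nonneg fun i _ => mul_nonneg (hx i) (hge i)).1 hsum
  refine ⟨hx, fun i => by simp, fun i hi => ?_⟩
  have hxi : x i ≠ 0 := (mem_filter.1 hi).2
  exact sub_eq_zero.1 ((mul_eq_zero.1 (hzero i (mem_univ i))).resolve_left hxi)

theorem IsZTensor.le_of_isEigenpairOn {A : (Fin m → Fin n) → ℝ} (hA : IsZTensor A)
    {J : Finset (Fin n)} (hJ : J.Nonempty) {lam mu : ℝ} {x y : Fin n → ℝ}
    (hx : IsEigenpairOn A J lam x) (hy : IsEigenpairOn A J mu y) : mu ≤ lam := by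
  obtain ⟨hx0, hxJ, hxe⟩ := hx
  obtain ⟨hy0, hyJ, hye⟩ := hy
  have hxpos : ∀ i ∈ J, 0 < x i := fun i hi => (hx0 i).lt_of_ne' ((hxJ i).2 hi)
  obtain ⟨i₀, hi₀, hmin⟩ := exists_min_image J (fun i => y i / x i) hJ
  set t := y i₀ / x i₀
  have hyi₀ : 0 < y i₀ := (hy0 i₀).lt_of_ne' ((hyJ i₀).2 hi₀)
  have heq : y i₀ = t * x i₀ := (div_mul_cancel₀ _ (hxpos i₀ hi₀).ne').symm
  have hle : ∀ i, t * x i ≤ y i := by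
    intro i
    by_cases hi : i ∈ J
    · exact (le_div_iff₀ (hxpos i hi)).1 (hmin i hi)
    · rw [not_not.1 (mt (hxJ i).1 hi), not_not.1 (mt (hyJ i).1 hi), mul_zero]
  have hkey := hA.tmap_le_of_mul_le (div_pos hyi₀ (hxpos i₀ hi₀)).le hx0 hle heq
  refine le_of_mul_le_mul_right ?_ (pow_pos hyi₀ (m - 1))
  calc mu * y i₀ ^ (m - 1) = tmap A y i₀ := hye i₀ hi₀
    _ ≤ t ^ (m - 1) * tmap A x i₀ := hkey
    _ = lam * y i₀ ^ (m - 1) := by rw [← hxe i₀ hi₀, heq, mul_pow]; ring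

theorem eq_of_isEigenpairOn_of_isZTensor_or_neg {A : (Fin m → Fin n) → ℝ}
    (hA : IsZTensor A ∨ IsZTensor (-A)) {J : Finset (Fin n)} (hJ : J.Nonempty) {lam mu : ℝ}
    {x y : Fin n → ℝ} (hx : IsEigenpairOn A J lam x) (hy : IsEigenpairOn A J mu y) :
    lam = mu := by
  rcases hA with hA | hA
  · exact le_antisymm (hA.le_of_isEigenpairOn hJ hy hx) (hA.le_of_isEigenpairOn hJ hx hy)
  · exact neg_injective <| le_antisymm (hA.le_of_isEigenpairOn hJ hy.neg hx.neg)
      (hA.le_of_isEigenpairOn hJ hx.neg hy.neg)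

end Tensor

theorem Z_tensor_pareto_eigenvalue_count_general {m n : ℕ} [NeZero m]
    (A : (Fin m → Fin n) → ℝ)
    (hA : (∀ i : Fin m → Fin n, (∃ k k', i k ≠ i k') → A i ≤ 0) ∨
          (∀ i : Fin m → Fin n, (∃ k k', i k ≠ i k') → 0 ≤ A i)) :
    ∃ S : Finset ℝ, S.card ≤ 2 ^ n - 1 ∧
      {lam : ℝ | ∃ x : Fin n → ℝ, (∀ i, 0 ≤ x i) ∧ x ≠ 0 ∧
        (∀ i, 0 ≤ lam * x i ^ (m - 1) - tmap A x i) ∧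
        ∑ i, x i * (lam * x i ^ (m - 1) - tmap A x i) = 0} ⊆ ↑S := by
  have hZ : IsZTensor A ∨ IsZTensor (-A) :=
    hA.imp_right fun h i hi => neg_nonpos.2 (h i hi)
  obtain ⟨S, hcard, hS⟩ := (univ.erase (∅ : Finset (Fin n))).exists_card_le_of_subsingleton
    (fun lam J => ∃ x, IsEigenpairOn A J lam x) fun J hJ _ _ ⟨_, hx⟩ ⟨_, hy⟩ =>
      eq_of_isEigenpairOn_of_isZTensor_or_neg hZ
        (nonempty_iff_ne_empty.2 (ne_of_mem_erase hJ)) hx hy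
  have hcard_subsets : (univ.erase (∅ : Finset (Fin n))).card = 2 ^ n - 1 := by
    rw [card_erase_of_mem (mem_univ _), card_univ, Fintype.card_finset, Fintype.card_fin]
  refine ⟨S, hcard_subsets ▸ hcard, fun lam ⟨x, hx0, hx, hge, hsum⟩ => hS ?_⟩
  obtain ⟨i, hi⟩ := Function.ne_iff.1 hx
  refine ⟨_, mem_erase.2 ⟨ne_empty_of_mem (a := i) ?_, mem_univ _⟩, x,
    isEigenpairOn_support_of_complementarity hx0 hge hsum⟩
  simpa using hi

/-- if 𝒜 or −𝒜 is a Z-tensor, then 𝒜 has at most 2ⁿ − 1 Pareto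
eigenvalues. -/
theorem Z_tensor_pareto_eigenvalue_count {m n : ℕ} [NeZero m] (hm : 2 ≤ m)
    (A : (Fin m → Fin n) → ℝ)
    (hA : (∀ i : Fin m → Fin n, (∃ k k', i k ≠ i k') → A i ≤ 0) ∨
          (∀ i : Fin m → Fin n, (∃ k k', i k ≠ i k') → 0 ≤ A i)) :
    ∃ S : Finset ℝ, S.card ≤ 2 ^ n - 1 ∧
      {lam : ℝ | ∃ x : Fin n → ℝ, (∀ i, 0 ≤ x i) ∧ x ≠ 0 ∧
        (∀ i, 0 ≤ lam * x i ^ (m - 1) - tmap A x i) ∧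
        ∑ i, x i * (lam * x i ^ (m - 1) - tmap A x i) = 0} ⊆ ↑S :=
  Z_tensor_pareto_eigenvalue_count_general A hA
end

section
/- Let K = cone{c₁,…,c_p} ⊂ ℝⁿ with {c₁,…,c_p} linearly independent, and C = [c₁,…,c_p]ᵀ. Then (λ̄, x̄) with x̄ ∈ K \ {0} solves the K-eigenvalue complementarity problem x̄ ∈ K, λ̄ℬx̄^{m−1} − 𝒜x̄^{m−1} ∈ K*, ⟨x̄, λ̄ℬx̄^{m−1} − 𝒜x̄^{m−1}⟩ = 0 if and only if x̄ = Cᵀᾱ for some ᾱ ∈ ℝ₊^p \ {0} solving the Pareto complementarity problem ᾱ ≥ 0, λ̄𝒟ᾱ^{m−1} − 𝒢ᾱ^{m−1} ≥ 0, ⟨ᾱ, λ̄𝒟ᾱ^{m−1} − 𝒢ᾱ^{m−1}⟩ = 0, where 𝒟 and 𝒢 are the m-th order p-dimensional tensors with entries d_{i₁⋯i_m} = Σ_{j₁,…,j_m} b_{j₁⋯j_m} c_{i₁j₁}⋯c_{i_mj_m} and g_{i₁⋯i_m} = Σ_{j₁,…,j_m} a_{j₁⋯j_m} c_{i₁j₁}⋯c_{i_mj_m}.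 -/
open Finset

noncomputable def conetrans {m n p : ℕ} (B : (Fin m → Fin n) → ℝ)
    (c : Fin p → Fin n → ℝ) : (Fin m → Fin p) → ℝ :=
  fun i => ∑ j : Fin m → Fin n, B j * ∏ k, c (i k) (j k)


lemma aux_sum_prod {m p : ℕ} [NeZero m] (i : Fin p) (h : Fin m → Fin p → ℝ) :
    ∑ g : Fin m → Fin p, (if g 0 = i then ∏ k ∈ Finset.univ.erase (0 : Fin m), h k (g k) else 0)
      = ∏ k ∈ Finset.univ.erase (0 : Fin m), ∑ l, h k l := by
  classical
  have hps := Finset.prod_univ_sum (fun k : Fin m => if k = 0 then ({i} : Finset (Fin p)) else univ)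
    (fun k l => if k = 0 then (1 : ℝ) else h k l)
  have hL : ∏ k : Fin m, ∑ j ∈ (if k = 0 then ({i} : Finset (Fin p)) else univ),
      (if k = 0 then (1:ℝ) else h k j) = ∏ k ∈ Finset.univ.erase (0 : Fin m), ∑ l, h k l := by
    rw [← Finset.mul_prod_erase univ _ (mem_univ (0 : Fin m))]
    have h0 : (∑ j ∈ (if (0:Fin m) = 0 then ({i} : Finset (Fin p)) else univ),
        if (0:Fin m) = 0 then (1:ℝ) else h 0 j) = 1 := by simp
    rw [h0, one_mul]
    apply Finset.prod_congr rfl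
    intro k hk
    simp [Finset.ne_of_mem_erase hk]
  have hpi : Fintype.piFinset (fun k : Fin m => if k = 0 then ({i} : Finset (Fin p)) else univ)
      = univ.filter (fun g : Fin m → Fin p => g 0 = i) := by
    ext g
    simp only [Fintype.mem_piFinset, mem_filter, mem_univ, true_and]
    constructor
    · intro hg; have := hg 0; simpa using this
    · intro hg k
      by_cases hk : k = 0
      · subst hk; simp [hg]
      · simp [hk]
  rw [hL, hpi] at hps
  rw [hps, Finset.sum_filter]
  apply Finset.sum_congr rfl
  intro g _
  by_cases hg : g 0 = i
  · rw [if_pos hg, if_pos hg, ← Finset.mul_prod_erase univ _ (mem_univ (0 : Fin m)),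
      if_pos rfl, one_mul]
    apply Finset.prod_congr rfl
    intro k hk
    rw [if_neg (Finset.ne_of_mem_erase hk)]
  · rw [if_neg hg, if_neg hg]

lemma key {m n p : ℕ} [NeZero m] (B : (Fin m → Fin n) → ℝ) (c : Fin p → Fin n → ℝ)
    (α : Fin p → ℝ) (i : Fin p) :
    tmap (conetrans B c) α i
      = ∑ j, c i j * tmap B (fun j => ∑ l, α l * c l j) j := by
  classical
  have hR : ∑ j, c i j * tmap B (fun j => ∑ l, α l * c l j) j
      = ∑ t : Fin m → Fin n, c i (t 0) *
          (B t * ∏ k ∈ Finset.univ.erase (0 : Fin m), ∑ l, α l * c l (t k)) := by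
    simp only [tmap, Finset.mul_sum]
    rw [Finset.sum_comm]
    apply Finset.sum_congr rfl
    intro t _
    simp only [mul_ite, mul_zero, Finset.sum_ite_eq, mem_univ, if_true]
  rw [hR]
  simp only [tmap, conetrans, Finset.sum_mul]
  have h1 : ∀ g : Fin m → Fin p,
      (if g 0 = i then ∑ t : Fin m → Fin n, B t * (∏ k, c (g k) (t k)) *
          ∏ k ∈ Finset.univ.erase (0 : Fin m), α (g k) else 0)
      = ∑ t : Fin m → Fin n, (if g 0 = i then B t * (∏ k, c (g k) (t k)) *
          ∏ k ∈ Finset.univ.erase (0 : Fin m), α (g k) else 0) := by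
    intro g; split <;> simp
  rw [Finset.sum_congr rfl (fun g _ => h1 g), Finset.sum_comm]
  apply Finset.sum_congr rfl
  intro t _
  have inner : ∀ g : Fin m → Fin p, (if g 0 = i then B t * (∏ k, c (g k) (t k)) *
          ∏ k ∈ Finset.univ.erase (0 : Fin m), α (g k) else 0)
      = c i (t 0) * B t * (if g 0 = i then
          ∏ k ∈ Finset.univ.erase (0 : Fin m), (α (g k) * c (g k) (t k)) else 0) := by
    intro g
    by_cases hg : g 0 = i
    · rw [if_pos hg, if_pos hg, ← Finset.mul_prod_erase univ (fun k => c (g k) (t k)) (mem_univ (0 : Fin m)), hg, Finset.prod_mul_distrib]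
      ring
    · simp [hg]
  rw [Finset.sum_congr rfl (fun g _ => inner g), ← Finset.mul_sum,
    aux_sum_prod i (fun k l => α l * c l (t k))]
  ring

lemma diff_eq {m n p : ℕ} [NeZero m] (A B : (Fin m → Fin n) → ℝ) (c : Fin p → Fin n → ℝ)
    (α : Fin p → ℝ) (lam : ℝ) (i : Fin p) :
    lam * tmap (conetrans B c) α i - tmap (conetrans A c) α i
      = ∑ j, c i j * (lam * tmap B (fun j => ∑ l, α l * c l j) j
          - tmap A (fun j => ∑ l, α l * c l j) j) := by
  rw [key, key, Finset.mul_sum, ← Finset.sum_sub_distrib]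
  exact Finset.sum_congr rfl (fun j _ => by ring)

lemma sum_eq {m n p : ℕ} [NeZero m] (A B : (Fin m → Fin n) → ℝ) (c : Fin p → Fin n → ℝ)
    (α : Fin p → ℝ) (lam : ℝ) :
    ∑ i, α i * (lam * tmap (conetrans B c) α i - tmap (conetrans A c) α i)
      = ∑ j, (∑ l, α l * c l j) * (lam * tmap B (fun j => ∑ l, α l * c l j) j
          - tmap A (fun j => ∑ l, α l * c l j) j) := by
  simp only [diff_eq, Finset.mul_sum, Finset.sum_mul]
  rw [Finset.sum_comm]
  exact Finset.sum_congr rfl (fun j _ => Finset.sum_congr rfl (fun i _ => by ring))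

/-- equivalence of the K-eigenvalue complementarity problem on a
finitely generated cone K = cone{c₁,…,c_p} with a Pareto complementarity problem
for the transformed tensors 𝒟 and 𝒢. -/
theorem polyhedral_cone_eicp_equiv {m n p : ℕ} [NeZero m]
    (A B : (Fin m → Fin n) → ℝ) (c : Fin p → Fin n → ℝ)
    (hc : LinearIndependent ℝ c) (lam : ℝ) (x : Fin n → ℝ) (hx : x ≠ 0) :
    ((∃ α : Fin p → ℝ, (∀ i, 0 ≤ α i) ∧ x = fun j => ∑ i, α i * c i j) ∧
      (∀ i, 0 ≤ ∑ j, c i j * (lam * tmap B x j - tmap A x j)) ∧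
      ∑ j, x j * (lam * tmap B x j - tmap A x j) = 0)
    ↔ ∃ α : Fin p → ℝ, (x = fun j => ∑ i, α i * c i j) ∧ α ≠ 0 ∧ (∀ i, 0 ≤ α i) ∧
        (∀ i, 0 ≤ lam * tmap (conetrans B c) α i - tmap (conetrans A c) α i) ∧
        ∑ i, α i * (lam * tmap (conetrans B c) α i - tmap (conetrans A c) α i) = 0 := by
  constructor
  · rintro ⟨⟨α, hα, hxα⟩, h1, h2⟩
    subst hxα
    refine ⟨α, rfl, ?_, hα, ?_, ?_⟩
    · intro h0
      apply hx
      funext j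
      simp [h0]
    · intro i
      rw [diff_eq]
      exact h1 i
    · rw [sum_eq]
      exact h2
  · rintro ⟨α, hxα, hα0, hα, h1, h2⟩
    subst hxα
    refine ⟨⟨α, hα, rfl⟩, ?_, ?_⟩
    · intro i
      have := h1 i
      rwa [diff_eq] at this
    · rwa [sum_eq] at h2
end
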